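/- (Path Corollary) Let (F_v)_{v∈V(G)} be a representation of a restricted frame graph G, and let u, v be vertices with F_u inside F_v. Then for every vertex x lying in the connected component of G − N[v] that contains u, the frame F_x is inside F_v. -/

import Mathlib

/-! ## Frames and restricted frame graphs -/

/-- An axis-parallel box in `ℝ²`, i.e. a product `[x1,x2] × [y1,y2]` of two closed
nondegenerate intervals. -/
structure Box : Type where
  x1 : ℝ
  x2 : ℝ
  y1 : ℝ
  y2 : ℝ
  hx : x1 < x2
  hy : y1 < y2

namespace Box

/-- The region bounded by the frame of a box: the closed box itself. -/
def region (B : Box) : Set (ℝ × ℝ) :=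
  {p : ℝ × ℝ | B.x1 ≤ p.1 ∧ p.1 ≤ B.x2 ∧ B.y1 ≤ p.2 ∧ p.2 ≤ B.y2}

/-- The frame of a box: the topological boundary of the closed box. -/
def frame (B : Box) : Set (ℝ × ℝ) :=
  {p : ℝ × ℝ | p ∈ B.region ∧ (p.1 = B.x1 ∨ p.1 = B.x2 ∨ p.2 = B.y1 ∨ p.2 = B.y2)}

/-- The left side `{x1} × [y1,y2]` of a frame. -/
def leftSide (B : Box) : Set (ℝ × ℝ) :=
  {p : ℝ × ℝ | p.1 = B.x1 ∧ B.y1 ≤ p.2 ∧ p.2 ≤ B.y2}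

/-- The right side `{x2} × [y1,y2]` of a frame. -/
def rightSide (B : Box) : Set (ℝ × ℝ) :=
  {p : ℝ × ℝ | p.1 = B.x2 ∧ B.y1 ≤ p.2 ∧ p.2 ≤ B.y2}

/-- The top side `[x1,x2] × {y2}` of a frame. -/
def topSide (B : Box) : Set (ℝ × ℝ) :=
  {p : ℝ × ℝ | p.2 = B.y2 ∧ B.x1 ≤ p.1 ∧ p.1 ≤ B.x2}

/-- The bottom side `[x1,x2] × {y1}` of a frame. -/
def bottomSide (B : Box) : Set (ℝ × ℝ) :=
  {p : ℝ × ℝ | p.2 = B.y1 ∧ B.x1 ≤ p.1 ∧ p.1 ≤ B.x2}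

/-- The four corners of a frame. -/
def corners (B : Box) : Set (ℝ × ℝ) :=
  {(B.x1, B.y1), (B.x1, B.y2), (B.x2, B.y1), (B.x2, B.y2)}

/-- `Box.Inside inner outer` : the frame of `outer` contains the frame of `inner`,
i.e. the two frames are disjoint and the frame of `inner` is contained in the region
bounded by the frame of `outer`. -/
def Inside (inner outer : Box) : Prop :=
  inner.frame ∩ outer.frame = ∅ ∧ inner.frame ⊆ outer.region

/-- `Box.Outside B outer` : the frames are disjoint and `B` is not inside `outer`. -/
def Outside (B outer : Box) : Prop :=
  B.frame ∩ outer.frame = ∅ ∧ ¬ Inside B outer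

end Box

/-- A family of frames `(F v)` is a representation of the graph `G` as a restricted
frame graph: distinct vertices are adjacent iff their frames intersect, and the four
restrictions on the representation hold. -/
structure IsFrameRepresentation {V : Type} (G : SimpleGraph V) (F : V → Box) : Prop where
  /-- Distinct vertices are adjacent iff their frames intersect. -/
  adj_iff : ∀ u v : V, u ≠ v → (G.Adj u v ↔ ((F u).frame ∩ (F v).frame).Nonempty)
  /-- (1) Corners of a frame do not coincide with any point of another frame. -/
  corner_free : ∀ u v : V, u ≠ v → (F u).corners ∩ (F v).frame = ∅
  /-- (2) The left side of a frame does not intersect any other frame. -/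
  left_free : ∀ u v : V, u ≠ v → (F u).leftSide ∩ (F v).frame = ∅
  /-- (3) If the right side of a frame intersects a second frame, this right side
  intersects both the top and the bottom side of that second frame. -/
  right_cross : ∀ u v : V, u ≠ v →
    ((F u).rightSide ∩ (F v).frame).Nonempty →
    ((F u).rightSide ∩ (F v).topSide).Nonempty ∧
      ((F u).rightSide ∩ (F v).bottomSide).Nonempty
  /-- (4) If two frames intersect, no third frame is entirely contained in the
  intersection of the regions bounded by the two frames. -/
  not_nested : ∀ u v w : V, u ≠ v → w ≠ u → w ≠ v →
    ((F u).frame ∩ (F v).frame).Nonempty →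
    ¬ ((F w).frame ⊆ (F u).region ∩ (F v).region)

/-- A graph is a restricted frame graph if it admits a frame representation. -/
def IsRestrictedFrameGraph {V : Type} (G : SimpleGraph V) : Prop :=
  ∃ F : V → Box, IsFrameRepresentation G F

/-! ## Basic graph notions -/

/-- The closed neighborhood `N[u] = {u} ∪ N(u)`. -/
def closedNbhd {V : Type} (G : SimpleGraph V) (u : V) : Set V :=
  insert u (G.neighborSet u)

/-- `G` has a full star-cutset: for some vertex `u` the removal of `N[u]`
disconnects `G`. -/
def HasFullStarCutset {V : Type} (G : SimpleGraph V) : Prop :=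
  ∃ u : V, ¬ (G.induce ((closedNbhd G u)ᶜ)).Preconnected

/-- `v` is a cut-vertex of `G`: its removal disconnects `G`. -/
def IsCutVertex {V : Type} (G : SimpleGraph V) (v : V) : Prop :=
  ¬ (G.induce {u : V | u ≠ v}).Preconnected

/-- `G` is a path graph: its vertices can be enumerated `0, …, n-1` so that two
vertices are adjacent iff they are consecutive. -/
def IsPathGraph {V : Type} (G : SimpleGraph V) : Prop :=
  ∃ (n : ℕ) (e : V ≃ Fin n), ∀ u v : V,
    G.Adj u v ↔ ((e u : ℕ) + 1 = (e v : ℕ) ∨ (e v : ℕ) + 1 = (e u : ℕ))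

/-- `G` is a cycle graph (on at least 3 vertices). -/
def IsCycleGraphOn {V : Type} (G : SimpleGraph V) : Prop :=
  ∃ n : ℕ, 3 ≤ n ∧ ∃ e : V ≃ Fin n, ∀ u v : V,
    G.Adj u v ↔ (((e u : ℕ) + 1) % n = (e v : ℕ) ∨ ((e v : ℕ) + 1) % n = (e u : ℕ))

/-- `x` is a leaf of `T`: it has exactly one neighbor. -/
def IsLeaf {V : Type} (T : SimpleGraph V) (x : V) : Prop :=
  (T.neighborSet x).ncard = 1

/-- `G` is a chandelier with pivot `v`: `G - v` is a tree `T` and `v` is adjacent to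
exactly the leaves of `T`. -/
def IsChandelierWithPivot {V : Type} (G : SimpleGraph V) (v : V) : Prop :=
  (G.induce {u : V | u ≠ v}).IsTree ∧
    ∀ u : ↥{u : V | u ≠ v}, (G.Adj v u.val ↔ IsLeaf (G.induce {u : V | u ≠ v}) u)

/-- `G` is a chandelier. -/
def IsChandelier {V : Type} (G : SimpleGraph V) : Prop :=
  ∃ v : V, IsChandelierWithPivot G v

/-- `G` is a luxury chandelier: a chandelier (with pivot `v` and tree `T = G - v`)
such that the neighbor in `T` of each leaf of `T` has degree 2 in `T`. -/
def IsLuxuryChandelier {V : Type} (G : SimpleGraph V) : Prop :=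
  ∃ v : V, IsChandelierWithPivot G v ∧
    ∀ x y : ↥{u : V | u ≠ v}, (G.induce {u : V | u ≠ v}).Adj x y →
      IsLeaf (G.induce {u : V | u ≠ v}) x →
      ((G.induce {u : V | u ≠ v}).neighborSet y).ncard = 2

/-! ## Multigraphs and subdivisions -/

/-- A loopless multigraph on vertex set `V`: a symmetric multiplicity function. -/
structure Multigraph (V : Type) where
  m : V → V → ℕ
  symm : ∀ u v : V, m u v = m v u
  loopless : ∀ v : V, m v v = 0

/-- The multigraph associated with a simple graph (each edge has multiplicity 1). -/
noncomputable def SimpleGraph.toMultigraph {V : Type} (G : SimpleGraph V) : Multigraph V where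
  m u v := @ite ℕ (G.Adj u v) (Classical.dec _) 1 0
  symm u v := by
    beta_reduce
    by_cases h : G.Adj u v
    · rw [if_pos h, if_pos (G.symm.symm _ _ h)]
    · rw [if_neg h, if_neg (fun h' => h (G.symm.symm _ _ h'))]
  loopless v := by
    beta_reduce
    rw [if_neg (G.loopless.irrefl v)]

/-- The interior (set of internal vertices) of a walk. -/
def walkInterior {V : Type} {G : SimpleGraph V} {a b : V} (p : G.Walk a b) : Set V :=
  {w : V | w ∈ p.support ∧ w ≠ a ∧ w ≠ b}

/-- A witness that the simple graph `H` is a `≥k`-subdivision of the multigraph `G`: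
each edge of `G` (counted with multiplicity) is replaced by a path with at least
`k+1` edges between (the images of) its endpoints, these paths being internally
disjoint from each other and from the branch vertices, and covering all of `H`. -/
structure MultiSubdivision {V W : Type} (G : Multigraph V) (H : SimpleGraph W) (k : ℕ) where
  /-- the embedding of branch vertices -/
  f : V ↪ W
  /-- the path replacing the `i`-th parallel edge between `u` and `v` -/
  path : ∀ u v : V, Fin (G.m u v) → H.Walk (f u) (f v)
  path_symm : ∀ (u v : V) (i : Fin (G.m u v)),
    path v u (Fin.cast (G.symm u v) i) = (path u v i).reverse
  path_ne : ∀ (u v : V) (i i' : Fin (G.m u v)), (i : ℕ) ≠ (i' : ℕ) →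
    path u v i ≠ path u v i'
  isPath : ∀ (u v : V) (i : Fin (G.m u v)), (path u v i).IsPath
  length_le : ∀ (u v : V) (i : Fin (G.m u v)), k + 1 ≤ (path u v i).length
  /-- the paths are internally disjoint from the branch vertices -/
  interior_avoid : ∀ (u v : V) (i : Fin (G.m u v)) (x : V),
    f x ∉ walkInterior (path u v i)
  /-- distinct paths are pairwise internally disjoint -/
  interior_disjoint : ∀ (u v : V) (i : Fin (G.m u v)) (u' v' : V) (i' : Fin (G.m u' v')),
    (walkInterior (path u v i) ∩ walkInterior (path u' v' i')).Nonempty →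
    (u = u' ∧ v = v' ∧ (i : ℕ) = (i' : ℕ)) ∨ (u = v' ∧ v = u' ∧ (i : ℕ) = (i' : ℕ))
  /-- every vertex of `H` is a branch vertex or an internal vertex of a path -/
  vertex_cover : ∀ w : W, (∃ x : V, f x = w) ∨
    ∃ (u v : V) (i : Fin (G.m u v)), w ∈ walkInterior (path u v i)
  /-- every edge of `H` lies on one of the paths -/
  edge_cover : ∀ e ∈ H.edgeSet, ∃ (u v : V) (i : Fin (G.m u v)), e ∈ (path u v i).edges

/-- `H` is a `≥k`-subdivision of the multigraph `G`. -/
def IsSubdivisionGE {V W : Type} (G : Multigraph V) (k : ℕ) (H : SimpleGraph W) : Prop :=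
  Nonempty (MultiSubdivision G H k)

/-- `H` is a subdivision of the simple graph `G` (every edge is replaced by a path
with at least one edge). -/
def IsSubdivision {V W : Type} (G : SimpleGraph V) (H : SimpleGraph W) : Prop :=
  IsSubdivisionGE G.toMultigraph 0 H

namespace Multigraph

/-- The underlying simple graph of a multigraph. -/
def support {V : Type} (G : Multigraph V) : SimpleGraph V where
  Adj u v := 0 < G.m u v
  symm := by
    constructor
    intro u v h
    show 0 < G.m v u
    rw [G.symm v u]
    exact h
  loopless := by
    constructor
    intro v h
    change 0 < G.m v v at h
    rw [G.loopless v] at h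
    exact Nat.lt_irrefl 0 h

/-- A multigraph is connected if its underlying simple graph is. -/
def Connected {V : Type} (G : Multigraph V) : Prop :=
  G.support.Connected

/-- A multigraph is 2-connected if it is connected, has at least two vertices, and
deleting any single vertex leaves it connected. -/
def TwoConnected {V : Type} (G : Multigraph V) : Prop :=
  G.support.Connected ∧ (∃ u v : V, u ≠ v) ∧
    ∀ v : V, (G.support.induce {u : V | u ≠ v}).Connected

/-- `v` is a feedback vertex of the multigraph `G`: `G - v` contains no cycle
(where a pair of parallel edges forms a cycle of length 2). -/
def IsFeedbackVertex {V : Type} (G : Multigraph V) (v : V) : Prop :=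
  (G.support.induce {u : V | u ≠ v}).IsAcyclic ∧
    ∀ u w : V, u ≠ v → w ≠ v → G.m u w ≤ 1

end Multigraph

/-! ## Induced cycles and big vertices -/

/-- `C` induces a cycle in `G`. -/
def IsInducedCycle {V : Type} (G : SimpleGraph V) (C : Set V) : Prop :=
  IsCycleGraphOn (G.induce C)

/-- `v` is a big vertex of the (induced cycle on) `C` with respect to the frame
representation `F`: `v ∈ C` and `F v` contains the frame of every vertex of `C`
outside `N[v]`. -/
def IsBigVertexOf {V : Type} (G : SimpleGraph V) (F : V → Box) (C : Set V) (v : V) : Prop :=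
  v ∈ C ∧ ∀ u ∈ C, u ≠ v → ¬ G.Adj v u → Box.Inside (F u) (F v)

/-- `v` is a big vertex of the representation `F`: it is a big vertex of some
induced cycle of `G`. -/
def IsBigVertex {V : Type} (G : SimpleGraph V) (F : V → Box) (v : V) : Prop :=
  ∃ C : Set V, IsInducedCycle G C ∧ IsBigVertexOf G F C v

/-! ## Gluing a chandelier onto a vertex -/

/-- The graph obtained from the disjoint union of `G₁` and `G₂` by identifying the
vertex `v` of `G₁` with the vertex `p` of `G₂`. -/
def glueAt {V₁ V₂ : Type} (G₁ : SimpleGraph V₁) (G₂ : SimpleGraph V₂) (v : V₁) (p : V₂) :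
    SimpleGraph (V₁ ⊕ {x : V₂ // x ≠ p}) :=
  SimpleGraph.fromRel (fun a b =>
    match a, b with
    | Sum.inl u, Sum.inl w => G₁.Adj u w
    | Sum.inr u, Sum.inr w => G₂.Adj u.val w.val
    | Sum.inl u, Sum.inr w => u = v ∧ G₂.Adj p w.val
    | Sum.inr _, Sum.inl _ => False)

/-! ## The multigraphs `Ĥ₁` and `Ĥ₂` -/

/-- The multiplicity matrix of `Ĥ₁` (vertices `a₁ = 0`, `b₁ = 1`, `v₁ = 2`, `v₂ = 3`,
`a₂ = 4`, `b₂ = 5`). -/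
def H1hatMatrix : Matrix (Fin 6) (Fin 6) ℕ :=
  !![0, 2, 1, 0, 0, 0;
     2, 0, 1, 0, 0, 0;
     1, 1, 0, 1, 0, 0;
     0, 0, 1, 0, 1, 1;
     0, 0, 0, 1, 0, 2;
     0, 0, 0, 1, 2, 0]

/-- The multigraph `Ĥ₁`: two disjoint digons `a₁b₁`, `a₂b₂`, and single edges
`a₁v₁`, `b₁v₁`, `v₁v₂`, `a₂v₂`, `b₂v₂`. -/
def H1hat : Multigraph (Fin 6) where
  m u v := H1hatMatrix u v
  symm := by
    intro u v
    fin_cases u <;> fin_cases v <;> rfl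
  loopless := by
    intro v
    fin_cases v <;> rfl

/-- The multiplicity matrix of `Ĥ₂` (vertices `a₁ = 0`, `b₁ = 1`, `v = 2`,
`a₂ = 3`, `b₂ = 4`). -/
def H2hatMatrix : Matrix (Fin 5) (Fin 5) ℕ :=
  !![0, 2, 1, 0, 0;
     2, 0, 1, 0, 0;
     1, 1, 0, 1, 1;
     0, 0, 1, 0, 2;
     0, 0, 1, 2, 0]

/-- The multigraph `Ĥ₂`: two digons `a₁b₁`, `a₂b₂`, and single edges
`a₁v`, `b₁v`, `a₂v`, `b₂v`. -/
def H2hat : Multigraph (Fin 5) where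
  m u v := H2hatMatrix u v
  symm := by
    intro u v
    fin_cases u <;> fin_cases v <;> rfl
  loopless := by
    intro v
    fin_cases v <;> rfl

/-! ## Subdivisions of `K₄` and their type -/

/-- The complete graph on four vertices. -/
def K4 : SimpleGraph (Fin 4) := ⊤

/-- The set of edges of `K₄` that are subdivided at least once in the subdivision
witnessed by `S` (i.e. replaced by a path with at least two edges). -/
def subdividedEdges {W : Type} {H : SimpleGraph W}
    (S : MultiSubdivision K4.toMultigraph H 0) : Set (Sym2 (Fin 4)) :=
  {e : Sym2 (Fin 4) | ∃ (u v : Fin 4) (i : Fin (K4.toMultigraph.m u v)),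
    e = s(u, v) ∧ 2 ≤ (S.path u v i).length}

/-! ## Adding a twin -/

/-- The graph obtained from `G` by adding a twin of `v`: a new vertex, non-adjacent
to `v`, whose neighborhood is exactly `N(v)`. -/
def addTwin {V : Type} (G : SimpleGraph V) (v : V) : SimpleGraph (V ⊕ Unit) :=
  SimpleGraph.fromRel (fun a b =>
    match a, b with
    | Sum.inl u, Sum.inl w => G.Adj u w
    | Sum.inr _, Sum.inl u => G.Adj v u
    | _, _ => False)

/-! ## The construction of Burling and Pawlik et al. -/

/-- A graph-stable set pair: a graph together with a collection of sets of vertices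
(intended: stable sets). -/
structure GSPair : Type 1 where
  V : Type
  G : SimpleGraph V
  S : Set (Set V)

namespace GSPair

/-- The vertex type of `next P`: the original vertices, the vertices `(s, u)` of the
copy `H_s` of the graph for each `s ∈ 𝒮`, and the new vertices `v_{s,t}`. -/
abbrev nextVertex (P : GSPair) : Type :=
  P.V ⊕ ((↥P.S × P.V) ⊕ (↥P.S × ↥P.S))

/-- The adjacency generator for the graph of `next P`. -/
def nextRel (P : GSPair) : P.nextVertex → P.nextVertex → Prop
  | Sum.inl u, Sum.inl v => P.G.Adj u v
  | Sum.inr (Sum.inl (s, u)), Sum.inr (Sum.inl (t, v)) => s = t ∧ P.G.Adj u v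
  | Sum.inr (Sum.inr (s, t)), Sum.inr (Sum.inl (s', v)) => s = s' ∧ v ∈ (t : Set P.V)
  | _, _ => False

/-- The procedure `next`: add a disjoint copy `H_s` of the graph for each `s ∈ 𝒮`, a
vertex `v_{s,t}` whose neighborhood is exactly the copy of `t` inside `H_s` for all
`s, t ∈ 𝒮`, and take as new collection of stable sets all `s ∪ t_s` and
`s ∪ {v_{s,t}}`. -/
def next (P : GSPair) : GSPair where
  V := P.nextVertex
  G := SimpleGraph.fromRel P.nextRel
  S := {A : Set P.nextVertex | ∃ s t : ↥P.S,
    A = (Sum.inl '' (s : Set P.V) : Set P.nextVertex) ∪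
        ((fun u : P.V => (Sum.inr (Sum.inl (s, u)) : P.nextVertex)) '' (t : Set P.V)) ∨
    A = (Sum.inl '' (s : Set P.V) : Set P.nextVertex) ∪ {Sum.inr (Sum.inr (s, t))}}

/-- The starting pair: a single vertex, with the single stable set consisting of
that vertex. -/
def base : GSPair := ⟨PUnit, ⊥, {Set.univ}⟩

/-- `P` is an induced subgraph-stable set pair of `Q`. -/
def IsInducedSubpair (P Q : GSPair) : Prop :=
  ∃ f : P.V ↪ Q.V, (∀ u v : P.V, P.G.Adj u v ↔ Q.G.Adj (f u) (f v)) ∧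
    ∀ A ∈ P.S, ∃ B ∈ Q.S, A = f ⁻¹' B

/-- A graph-stable set pair is constructible if it is an induced subgraph-stable set
pair of some iterate of `next` on the starting pair. -/
def Constructible (P : GSPair) : Prop :=
  ∃ i : ℕ, IsInducedSubpair P (next^[i] base)

end GSPair

namespace Box

lemma leftSide_eq_prod (B : Box) : B.leftSide = {B.x1} ×ˢ Set.Icc B.y1 B.y2 := rfl

lemma rightSide_eq_prod (B : Box) : B.rightSide = {B.x2} ×ˢ Set.Icc B.y1 B.y2 := rfl

lemma topSide_eq_prod (B : Box) : B.topSide = Set.Icc B.x1 B.x2 ×ˢ {B.y2} :=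
  Set.ext fun _ => and_comm

lemma bottomSide_eq_prod (B : Box) : B.bottomSide = Set.Icc B.x1 B.x2 ×ˢ {B.y1} :=
  Set.ext fun _ => and_comm

lemma region_eq_prod (B : Box) : B.region = Set.Icc B.x1 B.x2 ×ˢ Set.Icc B.y1 B.y2 :=
  Set.ext fun _ => and_assoc.symm

lemma frame_eq_union_sides (B : Box) :
    B.frame = B.leftSide ∪ B.topSide ∪ B.rightSide ∪ B.bottomSide := by
  have := B.hx.le
  have := B.hy.le
  ext ⟨a, b⟩
  simp only [frame, region, leftSide, rightSide, topSide, bottomSide, Set.mem_union,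
    Set.mem_ofPred_eq]
  constructor
  · grind
  · rintro (((h | h) | h) | h) <;> grind

lemma isPreconnected_frame (B : Box) : IsPreconnected B.frame := by
  have hcorner_x := B.hx.le
  have hcorner_y := B.hy.le
  rw [frame_eq_union_sides]
  refine IsPreconnected.union (B.x2, B.y1) (Or.inr ⟨rfl, le_rfl, hcorner_y⟩)
    ⟨rfl, hcorner_x, le_rfl⟩ ?_ ?_
  · refine IsPreconnected.union (B.x2, B.y2) (Or.inr ⟨rfl, hcorner_x, le_rfl⟩)
      ⟨rfl, hcorner_y, le_rfl⟩ ?_ ?_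
    · refine IsPreconnected.union (B.x1, B.y2) ⟨rfl, hcorner_y, le_rfl⟩
        ⟨rfl, le_rfl, hcorner_x⟩ ?_ ?_
      · rw [leftSide_eq_prod]; exact isPreconnected_singleton.prod isPreconnected_Icc
      · rw [topSide_eq_prod]; exact isPreconnected_Icc.prod isPreconnected_singleton
    · rw [rightSide_eq_prod]; exact isPreconnected_singleton.prod isPreconnected_Icc
  · rw [bottomSide_eq_prod]; exact isPreconnected_Icc.prod isPreconnected_singleton

lemma mem_Ioo_prod_of_mem_region_of_notMem_frame {B : Box} {p : ℝ × ℝ}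
    (hp : p ∈ B.region) (hpB : p ∉ B.frame) :
    p ∈ Set.Ioo B.x1 B.x2 ×ˢ Set.Ioo B.y1 B.y2 := by
  have hsides : ¬(p.1 = B.x1 ∨ p.1 = B.x2 ∨ p.2 = B.y1 ∨ p.2 = B.y2) := fun h => hpB ⟨hp, h⟩
  push Not at hsides
  obtain ⟨h1, h2, h3, h4⟩ := hsides
  obtain ⟨l1, l2, l3, l4⟩ := hp
  exact ⟨⟨l1.lt_of_ne' h1, l2.lt_of_ne h2⟩, ⟨l3.lt_of_ne' h3, l4.lt_of_ne h4⟩⟩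

/-- `B.frame` is connected and avoids `C.frame`, so it cannot meet both the inside of `C`
and the outside of its region. -/
lemma Inside.of_frame_inter_nonempty {A B C : Box} (hA : A.Inside C)
    (hAB : (A.frame ∩ B.frame).Nonempty) (hBC : B.frame ∩ C.frame = ∅) :
    B.Inside C := by
  set U := Set.Ioo C.x1 C.x2 ×ˢ Set.Ioo C.y1 C.y2
  have hUC : U ⊆ C.region := by
    rw [region_eq_prod]
    exact Set.prod_mono Set.Ioo_subset_Icc_self Set.Ioo_subset_Icc_self
  have hU : IsOpen U := isOpen_Ioo.prod isOpen_Ioo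
  have hCc : IsOpen C.regionᶜ := by
    rw [region_eq_prod]; exact (isClosed_Icc.prod isClosed_Icc).isOpen_compl
  have hcover : B.frame ⊆ U ∪ C.regionᶜ := by
    intro p hp
    by_cases hpC : p ∈ C.region
    · exact Or.inl (mem_Ioo_prod_of_mem_region_of_notMem_frame hpC
        fun h => (Set.eq_empty_iff_forall_notMem.1 hBC) p ⟨hp, h⟩)
    · exact Or.inr hpC
  obtain ⟨q, hqA, hqB⟩ := hAB
  have hqU : q ∈ U := mem_Ioo_prod_of_mem_region_of_notMem_frame (hA.2 hqA)
    fun h => (Set.eq_empty_iff_forall_notMem.1 hA.1) q ⟨hqA, h⟩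
  exact ⟨hBC, ((isPreconnected_frame B).subset_left_of_subset_union hU hCc
    (Set.disjoint_compl_right_iff_subset.2 hUC) hcover ⟨q, hqB, hqU⟩).trans hUC⟩

end Box

namespace IsFrameRepresentation

variable {V : Type} {G : SimpleGraph V} {F : V → Box}

lemma frame_inter_eq_empty (hF : IsFrameRepresentation G F) {a b : V} (hab : a ≠ b)
    (hnadj : ¬ G.Adj a b) : (F a).frame ∩ (F b).frame = ∅ :=
  Set.not_nonempty_iff_eq_empty.1 fun h => hnadj ((hF.adj_iff a b hab).2 h)

lemma inside_of_adj (hF : IsFrameRepresentation G F) {v a b : V}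
    (ha : (F a).Inside (F v)) (hab : G.Adj a b) (hb : b ∉ closedNbhd G v) :
    (F b).Inside (F v) := by
  simp only [closedNbhd, Set.mem_insert_iff, SimpleGraph.mem_neighborSet, not_or] at hb
  exact ha.of_frame_inter_nonempty ((hF.adj_iff a b hab.ne).1 hab)
    (hF.frame_inter_eq_empty hb.1 fun h => hb.2 h.symm)

lemma inside_of_reachable (hF : IsFrameRepresentation G F) {v : V}
    {a b : ↥(closedNbhd G v)ᶜ} (hab : (G.induce (closedNbhd G v)ᶜ).Reachable a b)
    (ha : (F a).Inside (F v)) : (F b).Inside (F v) := by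
  rw [SimpleGraph.reachable_iff_reflTransGen] at hab
  induction hab with
  | refl => exact ha
  | @tail _ d _ hcd ih => exact hF.inside_of_adj ih hcd d.2

end IsFrameRepresentation

theorem path_corollary_general
    {V : Type} (G : SimpleGraph V) (F : V → Box)
    (hF : IsFrameRepresentation G F) (u v : V)
    (hin : Box.Inside (F u) (F v))
    (hu : u ∈ (closedNbhd G v)ᶜ) (x : V) (hx : x ∈ (closedNbhd G v)ᶜ)
    (hreach : (G.induce ((closedNbhd G v)ᶜ)).Reachable ⟨u, hu⟩ ⟨x, hx⟩) :
    Box.Inside (F x) (F v) :=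
  hF.inside_of_reachable hreach hin

/-- **Path Corollary.** Let `(F v)` be a representation of a
restricted frame graph `G`, and let `u`, `v` be vertices with `F u` inside `F v`.
Then for every vertex `x` lying in the connected component of `G − N[v]` that
contains `u`, the frame `F x` is inside `F v`. -/
theorem path_corollary
    {V : Type} [Fintype V] (G : SimpleGraph V) (F : V → Box)
    (hF : IsFrameRepresentation G F) (u v : V)
    (hin : Box.Inside (F u) (F v))
    (hu : u ∈ (closedNbhd G v)ᶜ) (x : V) (hx : x ∈ (closedNbhd G v)ᶜ)
    (hreach : (G.induce ((closedNbhd G v)ᶜ)).Reachable ⟨u, hu⟩ ⟨x, hx⟩) :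
    Box.Inside (F x) (F v) :=
  path_corollary_general G F hF u v hin hu x hx hreach
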